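/- arXiv:1907.10771 — 4 statements merged into one kernel-verified Lean document; each statement's English description precedes it below -/
import Mathlib

section
/- Let G be a finite simple T-regular graph (T ≥ 1) on n ≥ 2 vertices with normalized adjacency matrix A(G), and let H ≥ 1 be an integer. Set D₀ = T·2^H − (T−1) and define the n×n matrix Ã = ((1 + T·(2^{H−1} − 1))/D₀)·I + (T·2^{H−1}/D₀)·A(G), which is symmetric and row-stochastic. Then for every symmetric row-stochastic m×m matrix B with m ≥ 2, TwoSidedGap(Ã ⊗ B) ≥ min{ (T·2^{H−1}/(T·2^H − (T−1)))·TwoSidedGap(A(G)), TwoSidedGap(B) }. (This is the global-expansion bound for the local densifier construction, whose 1-skeleton has adjacency matrix Ã ⊗ B where B is the normalized adjacency matrix of the 1-skeleton of the base complex.) -/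
open Matrix Finset BigOperators Kronecker

noncomputable def eigs {α : Type*} [Fintype α] [DecidableEq α] (M : Matrix α α ℝ) : Multiset ℝ :=
  M.charpoly.roots

noncomputable def sortedEigs {α : Type*} [Fintype α] [DecidableEq α] (M : Matrix α α ℝ) : List ℝ :=
  (eigs M).sort (· ≤ ·)

noncomputable def secondEig {α : Type*} [Fintype α] [DecidableEq α] (M : Matrix α α ℝ) : ℝ :=
  (sortedEigs M).getD (Fintype.card α - 2) 0

noncomputable def minEig {α : Type*} [Fintype α] [DecidableEq α] (M : Matrix α α ℝ) : ℝ :=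
  (sortedEigs M).getD 0 0

noncomputable def oneSidedGap {α : Type*} [Fintype α] [DecidableEq α] (M : Matrix α α ℝ) : ℝ :=
  1 - secondEig M

noncomputable def twoSidedGap {α : Type*} [Fintype α] [DecidableEq α] (M : Matrix α α ℝ) : ℝ :=
  1 - max |secondEig M| |minEig M|

def RowStochastic {α : Type*} [Fintype α] (M : Matrix α α ℝ) : Prop :=
  (∀ i j, 0 ≤ M i j) ∧ ∀ i, ∑ j, M i j = 1

/-- Normalized adjacency matrix of a graph, with normalization 1/T. -/
noncomputable def normAdj {V : Type*} [Fintype V] (G : SimpleGraph V) [DecidableRel G.Adj] (T : ℕ) :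
    Matrix V V ℝ :=
  fun u v => if G.Adj u v then 1 / (T : ℝ) else 0


/-!
For real symmetric matrices the eigenvalue multiset of `M ⊗ₖ N` consists of the products `λμ`,
and that of `a • 1 + b • M` of the values `a + bλ`. A symmetric row-stochastic matrix has all
its eigenvalues in `[-1, 1]`, one of them equal to `1`, so `1 - twoSidedGap` is the largest `|λ|`
once one copy of `1` is removed from the spectrum. Removing `1` from the spectrum of `Ã ⊗ₖ B`
leaves the nontrivial eigenvalues of `B` together with products `λμ` where `λ` is a nontrivial
eigenvalue of `Ã` and `|μ| ≤ 1`. Finally `Ã = a • 1 + b • A(G)` with `a, b ≥ 0`, `a + b = 1`, and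
`|a + bλ| ≤ 1 - b (1 - |λ|)`.
-/

section Spectrum

variable {α β : Type*} [Fintype α] [DecidableEq α] [Fintype β] [DecidableEq β]

lemma mem_eigs_iff {M : Matrix α α ℝ} {x : ℝ} : x ∈ eigs M ↔ ∃ v ≠ 0, M *ᵥ v = x • v := by
  rw [eigs, Polynomial.mem_roots M.charpoly_monic.ne_zero, Polynomial.IsRoot, eval_charpoly,
    ← exists_mulVec_eq_zero_iff]
  simp [sub_mulVec, sub_eq_zero, eq_comm]

open Polynomial in
lemma eigs_diagonal (d : α → ℝ) : eigs (diagonal d) = univ.val.map d := by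
  rw [eigs, charpoly_diagonal, roots_prod _ _ (prod_ne_zero_iff.mpr fun i _ => X_sub_C_ne_zero _)]
  simp

lemma eigs_mul_mul_of_mul_eq_one {P Q : Matrix α α ℝ} (hPQ : P * Q = 1) (M : Matrix α α ℝ) :
    eigs (P * M * Q) = eigs M := by
  rw [eigs, eigs, charpoly_mul_comm, ← mul_assoc, mul_eq_one_comm.mp hPQ, one_mul]

namespace Matrix.IsHermitian

variable {M : Matrix α α ℝ} {N : Matrix β β ℝ}

lemma eq_mul_diagonal_mul_star (hM : M.IsHermitian) :
    M = (hM.eigenvectorUnitary : Matrix α α ℝ) * diagonal hM.eigenvalues *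
      star (hM.eigenvectorUnitary : Matrix α α ℝ) := by
  conv_lhs => rw [hM.spectral_theorem, Unitary.conjStarAlgAut_apply, RCLike.ofReal_real_eq_id]
  rfl

lemma eigs_eq (hM : M.IsHermitian) : eigs M = univ.val.map hM.eigenvalues := by
  conv_lhs => rw [hM.eq_mul_diagonal_mul_star]
  rw [eigs_mul_mul_of_mul_eq_one (Unitary.coe_mul_star_self _), eigs_diagonal]

lemma card_eigs (hM : M.IsHermitian) : Multiset.card (eigs M) = Fintype.card α := by
  simp [hM.eigs_eq, Finset.card_univ]

lemma eigs_smul_one_add_smul (hM : M.IsHermitian) (a b : ℝ) :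
    eigs (a • (1 : Matrix α α ℝ) + b • M) = (eigs M).map (fun x => a + b * x) := by
  set U := (hM.eigenvectorUnitary : Matrix α α ℝ)
  have hU : U * star U = 1 := Unitary.coe_mul_star_self _
  have hdiag : diagonal (fun i => a + b * hM.eigenvalues i)
      = a • (1 : Matrix α α ℝ) + b • diagonal hM.eigenvalues := by
    ext i j
    by_cases h : i = j <;> simp [h]
  have hconj : a • (1 : Matrix α α ℝ) + b • M
      = U * diagonal (fun i => a + b * hM.eigenvalues i) * star U := by
    conv_lhs => rw [hM.eq_mul_diagonal_mul_star]
    simp only [hdiag, mul_add, add_mul, Matrix.mul_smul, Matrix.smul_mul, mul_one, hU]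
    rfl
  rw [hconj, eigs_mul_mul_of_mul_eq_one hU, eigs_diagonal, hM.eigs_eq, Multiset.map_map]
  rfl

lemma eigs_kronecker (hM : M.IsHermitian) (hN : N.IsHermitian) :
    eigs (M ⊗ₖ N) = (eigs M).bind fun x => (eigs N).map (x * ·) := by
  set U := (hM.eigenvectorUnitary : Matrix α α ℝ)
  set V := (hN.eigenvectorUnitary : Matrix β β ℝ)
  have hUV : (U ⊗ₖ V) * (star U ⊗ₖ star V) = 1 := by
    rw [← mul_kronecker_mul, show U * star U = 1 from Unitary.coe_mul_star_self _,
      show V * star V = 1 from Unitary.coe_mul_star_self _, one_kronecker_one]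
  have hconj : M ⊗ₖ N
      = (U ⊗ₖ V) * diagonal (fun p => hM.eigenvalues p.1 * hN.eigenvalues p.2)
        * (star U ⊗ₖ star V) := by
    conv_lhs => rw [hM.eq_mul_diagonal_mul_star, hN.eq_mul_diagonal_mul_star]
    rw [← diagonal_kronecker_diagonal, ← mul_kronecker_mul, ← mul_kronecker_mul]
  rw [hconj, eigs_mul_mul_of_mul_eq_one hUV, eigs_diagonal, hM.eigs_eq, hN.eigs_eq,
    ← univ_product_univ, Finset.product_val]
  simp [SProd.sprod, Multiset.product, Multiset.map_bind, Multiset.bind_map]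

end Matrix.IsHermitian

end Spectrum

namespace RowStochastic

variable {α β : Type*} [Fintype α] [Fintype β]

lemma smul_one_add_smul [DecidableEq α] {M : Matrix α α ℝ} (hM : RowStochastic M) {a b : ℝ}
    (ha : 0 ≤ a) (hb : 0 ≤ b) (hab : a + b = 1) :
    RowStochastic (a • (1 : Matrix α α ℝ) + b • M) := by
  refine ⟨fun i j => ?_, fun i => ?_⟩
  · by_cases h : i = j
    · simpa [h] using add_nonneg ha (mul_nonneg hb (hM.1 j j))
    · simpa [h] using mul_nonneg hb (hM.1 i j)
  · simp [sum_add_distrib, ← mul_sum, hM.2 i, one_apply, hab]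

lemma kronecker {M : Matrix α α ℝ} {N : Matrix β β ℝ} (hM : RowStochastic M)
    (hN : RowStochastic N) : RowStochastic (M ⊗ₖ N) :=
  ⟨fun i j => mul_nonneg (hM.1 _ _) (hN.1 _ _), fun i => by
    simp [← univ_product_univ, sum_product, ← mul_sum, hN.2, hM.2]⟩

lemma one_mem_eigs [DecidableEq α] [Nonempty α] {M : Matrix α α ℝ} (hM : RowStochastic M) :
    (1 : ℝ) ∈ eigs M := by
  refine mem_eigs_iff.mpr
    ⟨fun _ => 1, fun h => by simpa using congrFun h (Classical.arbitrary α), ?_⟩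
  ext i
  simp [mulVec, dotProduct, hM.2 i]

-- Evaluate the eigenvector equation at a coordinate where `|v i|` is maximal.
lemma abs_le_one_of_mem_eigs [DecidableEq α] {M : Matrix α α ℝ} (hM : RowStochastic M)
    {x : ℝ} (hx : x ∈ eigs M) : |x| ≤ 1 := by
  obtain ⟨v, hv, hMv⟩ := mem_eigs_iff.mp hx
  obtain ⟨j, hj⟩ := Function.ne_iff.mp hv
  obtain ⟨i, -, hi⟩ := exists_max_image univ (fun k => |v k|) ⟨j, mem_univ j⟩
  have hvi : 0 < |v i| := (abs_pos.mpr hj).trans_le (hi j (mem_univ j))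
  refine le_of_mul_le_mul_right ?_ hvi
  calc |x| * |v i| = |∑ k, M i k * v k| := by
        rw [← abs_mul, ← smul_eq_mul, ← Pi.smul_apply, ← hMv]; rfl
    _ ≤ ∑ k, M i k * |v k| := by
        refine (abs_sum_le_sum_abs _ _).trans_eq (sum_congr rfl fun k _ => ?_)
        rw [abs_mul, abs_of_nonneg (hM.1 i k)]
    _ ≤ ∑ k, M i k * |v i| :=
        sum_le_sum fun k _ => mul_le_mul_of_nonneg_left (hi k (mem_univ k)) (hM.1 i k)
    _ = 1 * |v i| := by rw [← sum_mul, hM.2 i]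

end RowStochastic

lemma normAdj_isSymm {V : Type*} [Fintype V] (G : SimpleGraph V) [DecidableRel G.Adj] (T : ℕ) :
    (normAdj G T).IsSymm :=
  IsSymm.ext fun u v => by simp only [normAdj, G.adj_comm]

lemma normAdj_rowStochastic {V : Type*} [Fintype V] (G : SimpleGraph V) [DecidableRel G.Adj]
    {T : ℕ} (hT : 1 ≤ T) (hreg : G.IsRegularOfDegree T) : RowStochastic (normAdj G T) := by
  classical
  refine ⟨fun u v => by unfold normAdj; split <;> positivity, fun u => ?_⟩
  have hT' : (T : ℝ) ≠ 0 := by exact_mod_cast (by omega : T ≠ 0)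
  simp only [normAdj]
  rw [← sum_filter, ← G.neighborFinset_eq_filter, sum_const, G.card_neighborFinset_eq_degree,
    hreg u, nsmul_eq_mul, mul_one_div_cancel hT']

lemma List.Pairwise.isGreatest_abs {l : List ℝ} (hl : l.Pairwise (· ≤ ·)) (hne : l ≠ []) :
    IsGreatest (abs '' {x | x ∈ l}) (max |l.getD (l.length - 1) 0| |l.getD 0 0|) := by
  have hlen : 0 < l.length := List.length_pos_iff.mpr hne
  have hlast : l.length - 1 < l.length := Nat.sub_lt hlen one_pos
  rw [List.getD_eq_getElem _ _ hlast, List.getD_eq_getElem _ _ hlen]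
  refine ⟨?_, ?_⟩
  · rcases max_choice |l[l.length - 1]| |l[0]| with h | h <;> rw [h]
    exacts [⟨_, List.getElem_mem hlast, rfl⟩, ⟨_, List.getElem_mem hlen, rfl⟩]
  · rintro _ ⟨x, hx, rfl⟩
    obtain ⟨k, hk, rfl⟩ := List.getElem_of_mem hx
    rw [max_comm]
    exact abs_le_max_abs_abs
      (hl.rel_get_of_le (a := ⟨0, hlen⟩) (b := ⟨k, hk⟩) (Nat.zero_le k))
      (hl.rel_get_of_le (a := ⟨k, hk⟩) (b := ⟨_, hlast⟩) (Nat.le_sub_one_of_lt hk))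

namespace Multiset

lemma sort_eq_sort_erase_append {γ : Type*} [LinearOrder γ] {s : Multiset γ} {a : γ}
    (ha : a ∈ s) (hle : ∀ x ∈ s, x ≤ a) :
    s.sort (· ≤ ·) = (s.erase a).sort (· ≤ ·) ++ [a] := by
  refine List.Perm.eq_of_pairwise' (pairwise_sort _ _) ?_ ?_
  · rw [List.pairwise_append]
    refine ⟨pairwise_sort _ _, List.pairwise_singleton _ _, fun x hx y hy => ?_⟩
    rw [List.mem_singleton.mp hy]
    exact hle x (mem_of_mem_erase ((mem_sort _).mp hx))
  · rw [← coe_eq_coe, ← coe_add, sort_eq, sort_eq, coe_singleton, add_comm, singleton_add,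
      cons_erase ha]

lemma isGreatest_abs_erase {s : Multiset ℝ} {a : ℝ} (hs : 2 ≤ Multiset.card s) (ha : a ∈ s)
    (hle : ∀ x ∈ s, x ≤ a) :
    IsGreatest (abs '' {x | x ∈ s.erase a})
      (max |(s.sort (· ≤ ·)).getD (Multiset.card s - 2) 0|
        |(s.sort (· ≤ ·)).getD 0 0|) := by
  have hlen : ((s.erase a).sort (· ≤ ·)).length = Multiset.card s - 1 := by
    rw [length_sort, card_erase_of_mem ha, Nat.pred_eq_sub_one]
  rw [sort_eq_sort_erase_append ha hle, List.getD_append _ _ _ _ (by omega),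
    List.getD_append _ _ _ _ (by omega),
    show Multiset.card s - 2 = Multiset.card s - 1 - 1 by omega, ← hlen]
  convert (pairwise_sort (s.erase a) (· ≤ ·)).isGreatest_abs
    (List.ne_nil_of_length_pos (by omega)) using 3
  simp

lemma erase_one_bind_map_mul {s t : Multiset ℝ} (hs : 1 ∈ s) (ht : 1 ∈ t) :
    (s.bind fun x => t.map (x * ·)).erase 1
      = t.erase 1 + (s.erase 1).bind fun x => t.map (x * ·) := by
  conv_lhs => rw [← cons_erase hs, cons_bind]
  simp only [one_mul, map_id']
  exact erase_add_left_pos _ ht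

end Multiset

section TwoSidedGap

variable {α β : Type*} [Fintype α] [DecidableEq α] [Fintype β] [DecidableEq β]

lemma isGreatest_one_sub_twoSidedGap {M : Matrix α α ℝ} (hM : M.IsSymm) (hMs : RowStochastic M)
    (hα : 2 ≤ Fintype.card α) :
    IsGreatest (abs '' {x | x ∈ (eigs M).erase 1}) (1 - twoSidedGap M) := by
  have : Nonempty α := Fintype.card_pos_iff.mp (by omega)
  have hcard := (isHermitian_iff_isSymm.mpr hM).card_eigs
  rw [twoSidedGap, sub_sub_cancel, secondEig, minEig, sortedEigs, ← hcard]
  exact Multiset.isGreatest_abs_erase (hcard ▸ hα) hMs.one_mem_eigs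
    fun x hx => (le_abs_self x).trans (hMs.abs_le_one_of_mem_eigs hx)

lemma le_twoSidedGap_smul_one_add_smul {M : Matrix α α ℝ} (hM : M.IsSymm)
    (hMs : RowStochastic M) (hα : 2 ≤ Fintype.card α) {a b : ℝ} (ha : 0 ≤ a) (hb : 0 ≤ b)
    (hab : a + b = 1) :
    b * twoSidedGap M ≤ twoSidedGap (a • (1 : Matrix α α ℝ) + b • M) := by
  have : Nonempty α := Fintype.card_pos_iff.mp (by omega)
  have hbound := (isGreatest_one_sub_twoSidedGap hM hMs hα).2
  obtain ⟨z, hz, hzr⟩ := (isGreatest_one_sub_twoSidedGap ((isSymm_one.smul a).add (hM.smul b))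
    (hMs.smul_one_add_smul ha hb hab) hα).1
  have herase : ((eigs M).map fun x => a + b * x).erase 1
      = ((eigs M).erase 1).map fun x => a + b * x := by
    rw [Multiset.map_erase_of_mem _ _ hMs.one_mem_eigs, mul_one, hab]
  rw [(isHermitian_iff_isSymm.mpr hM).eigs_smul_one_add_smul, herase] at hz
  obtain ⟨y, hy, rfl⟩ := Multiset.mem_map.mp hz
  have hy' : |y| ≤ 1 - twoSidedGap M := hbound ⟨y, hy, rfl⟩
  have : |a + b * y| ≤ a + b * (1 - twoSidedGap M) :=
    calc |a + b * y| ≤ |a| + |b| * |y| := by rw [← abs_mul]; exact abs_add_le _ _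
      _ ≤ a + b * (1 - twoSidedGap M) := by
        rw [abs_of_nonneg ha, abs_of_nonneg hb]; gcongr
  linarith

lemma min_twoSidedGap_le_twoSidedGap_kronecker {M : Matrix α α ℝ} {N : Matrix β β ℝ}
    (hM : M.IsSymm) (hN : N.IsSymm) (hMs : RowStochastic M) (hNs : RowStochastic N)
    (hα : 2 ≤ Fintype.card α) (hβ : 2 ≤ Fintype.card β) :
    min (twoSidedGap M) (twoSidedGap N) ≤ twoSidedGap (M ⊗ₖ N) := by
  have : Nonempty α := Fintype.card_pos_iff.mp (by omega)
  have : Nonempty β := Fintype.card_pos_iff.mp (by omega)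
  have hMbound := (isGreatest_one_sub_twoSidedGap hM hMs hα).2
  have hNbound := (isGreatest_one_sub_twoSidedGap hN hNs hβ).2
  have hMNsymm : (M ⊗ₖ N).IsSymm := IsSymm.ext fun i j => by simp [hM.apply, hN.apply]
  obtain ⟨z, hz, hzr⟩ := (isGreatest_one_sub_twoSidedGap hMNsymm (hMs.kronecker hNs)
    (by rw [Fintype.card_prod]; nlinarith)).1
  rw [(isHermitian_iff_isSymm.mpr hM).eigs_kronecker (isHermitian_iff_isSymm.mpr hN),
    Multiset.erase_one_bind_map_mul hMs.one_mem_eigs hNs.one_mem_eigs] at hz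
  suffices |z| ≤ max (1 - twoSidedGap M) (1 - twoSidedGap N) by
    rw [← sub_sub_cancel 1 (twoSidedGap M), ← sub_sub_cancel 1 (twoSidedGap N),
      min_sub_sub_left]
    linarith
  rcases Multiset.mem_add.mp hz with hzN | hzM
  · exact le_max_of_le_right (hNbound ⟨z, hzN, rfl⟩)
  · obtain ⟨x, hx, y, hy, rfl⟩ : ∃ x ∈ (eigs M).erase 1, ∃ y ∈ eigs N, x * y = z := by
      simpa using hzM
    have hx' : |x| ≤ 1 - twoSidedGap M := hMbound ⟨x, hx, rfl⟩
    refine le_max_of_le_left ?_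
    calc |x * y| = |x| * |y| := abs_mul x y
      _ ≤ (1 - twoSidedGap M) * 1 :=
        mul_le_mul hx' (hNs.abs_le_one_of_mem_eigs hy) (abs_nonneg y) ((abs_nonneg x).trans hx')
      _ = 1 - twoSidedGap M := mul_one _

end TwoSidedGap

/-- global-expansion bound for the local densifier construction. -/
theorem stmt_2 {n : ℕ} (hn : 2 ≤ n) (T : ℕ) (hT : 1 ≤ T)
    (G : SimpleGraph (Fin n)) [DecidableRel G.Adj] (hreg : G.IsRegularOfDegree T)
    (H : ℕ) (hH : 1 ≤ H)
    (D0 : ℝ) (hD0 : D0 = (T : ℝ) * 2 ^ H - ((T : ℝ) - 1))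
    (At : Matrix (Fin n) (Fin n) ℝ)
    (hAt : At = ((1 + (T : ℝ) * ((2 : ℝ) ^ (H - 1) - 1)) / D0) • (1 : Matrix (Fin n) (Fin n) ℝ)
        + (((T : ℝ) * (2 : ℝ) ^ (H - 1)) / D0) • normAdj G T)
    {m : ℕ} (hm : 2 ≤ m)
    (B : Matrix (Fin m) (Fin m) ℝ) (hBsym : B.IsSymm) (hBrs : RowStochastic B) :
    twoSidedGap (At ⊗ₖ B) ≥
      min (((T : ℝ) * (2 : ℝ) ^ (H - 1) / ((T : ℝ) * 2 ^ H - ((T : ℝ) - 1)))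
            * twoSidedGap (normAdj G T))
        (twoSidedGap B) := by
  have hT' : (1 : ℝ) ≤ T := by exact_mod_cast hT
  have hpow : (2 : ℝ) ^ H = 2 * 2 ^ (H - 1) := by rw [← pow_succ']; congr 1; omega
  have hpow1 : (1 : ℝ) ≤ 2 ^ (H - 1) := one_le_pow₀ (by norm_num)
  have hD0pos : 0 < D0 := by rw [hD0, hpow]; nlinarith
  have ha : 0 ≤ (1 + (T : ℝ) * ((2 : ℝ) ^ (H - 1) - 1)) / D0 :=
    div_nonneg (by nlinarith) hD0pos.le
  have hb : 0 ≤ (T : ℝ) * (2 : ℝ) ^ (H - 1) / D0 := by positivity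
  have hab : (1 + (T : ℝ) * ((2 : ℝ) ^ (H - 1) - 1)) / D0 + (T : ℝ) * (2 : ℝ) ^ (H - 1) / D0
      = 1 := by
    rw [← add_div, div_eq_one_iff_eq hD0pos.ne', hD0, hpow]; ring
  have hcard : 2 ≤ Fintype.card (Fin n) := by rwa [Fintype.card_fin]
  have hAsymm := normAdj_isSymm G T
  have hArs := normAdj_rowStochastic G hT hreg
  have hAtsymm : At.IsSymm := hAt ▸ (isSymm_one.smul _).add (hAsymm.smul _)
  have hAtrs : RowStochastic At := hAt ▸ hArs.smul_one_add_smul ha hb hab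
  rw [ge_iff_le, ← hD0]
  calc _ ≤ min (twoSidedGap At) (twoSidedGap B) :=
        min_le_min_right _ (hAt ▸ le_twoSidedGap_smul_one_add_smul hAsymm hArs hcard ha hb hab)
    _ ≤ twoSidedGap (At ⊗ₖ B) :=
        min_twoSidedGap_le_twoSidedGap_kronecker hAtsymm hBsym hAtrs hBrs hcard
          (by rwa [Fintype.card_fin])
end

section
/- Let M be the star-with-loops transition matrix with parameters T ≥ 1 and w_C, w_S > 0, and D = w_C + T·w_S. Then M has real eigenvalues, and its multiset of eigenvalues is exactly: 1 with multiplicity one, 1/2 with multiplicity T − 1, and w_C/D − 1/2 with multiplicity one. In particular, every eigenvalue of M other than the simple eigenvalue 1 has absolute value at most 1/2. Moreover, the (T−1)-dimensional space of vectors that vanish on the center and whose satellite entries sum to 0 is an eigenspace of M for the eigenvalue 1/2. -/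
open Matrix Finset BigOperators Kronecker

/-- The star-with-loops transition matrix with parameters T, w_C, w_S:
center is vertex 0, satellites are 1,…,T. -/
noncomputable def starM (T : ℕ) (wC wS : ℝ) : Matrix (Fin (T + 1)) (Fin (T + 1)) ℝ :=
  fun i j =>
    if i = 0 then (if j = 0 then wC / (wC + T * wS) else wS / (wC + T * wS))
    else if j = 0 then 1 / 2
    else if i = j then 1 / 2
    else 0

/-! Listing the satellites before the center, `t • 1 - M` is a 2×2 block matrix whose satellite
block is `(t - 1/2) • 1`. For `t ≠ 1/2` the Schur complement gives
`det (t • 1 - M) = (t - 1/2)^T (t - a - T b / (2 (t - 1/2)))` with `a = w_C/D`, `b = w_S/D`;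
since `a + T b = 1` this is `(t - 1)(t - 1/2)^(T-1)(t - (a - 1/2))`, and two polynomials that
agree off `1/2` are equal. -/

open Polynomial

theorem det_fromBlocks_smul_one_const {K ι : Type*} [Field K] [Fintype ι] [DecidableEq ι]
    (δ β γ α : K) (hδ : δ ≠ 0) :
    (fromBlocks (δ • (1 : Matrix ι ι K)) (of fun _ _ => β) (of fun _ _ => γ)
      (of fun _ _ => α) : Matrix (ι ⊕ Unit) (ι ⊕ Unit) K).det
      = δ ^ Fintype.card ι * (α - Fintype.card ι * γ * β / δ) := by
  let _ : Invertible (δ • (1 : Matrix ι ι K)) :=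
    ⟨δ⁻¹ • 1, by simp [smul_smul, hδ], by simp [smul_smul, hδ]⟩
  rw [det_fromBlocks₁₁, det_smul, det_one, mul_one, det_unique,
    show ⅟(δ • (1 : Matrix ι ι K)) = δ⁻¹ • 1 from rfl]
  simp only [Matrix.mul_smul, Matrix.mul_one, smul_of, Matrix.sub_apply, of_apply, Matrix.mul_apply,
    Pi.smul_apply, smul_eq_mul, sum_const, card_univ, nsmul_eq_mul]
  ring

def satellitesCenterEquiv (T : ℕ) : Fin T ⊕ Unit ≃ Fin (T + 1) :=
  ((finSuccEquiv T).trans (Equiv.optionEquivSumPUnit _)).symm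

@[simp]
lemma satellitesCenterEquiv_inl (T : ℕ) (i : Fin T) :
    satellitesCenterEquiv T (Sum.inl i) = i.succ := by
  simp [satellitesCenterEquiv]

@[simp]
lemma satellitesCenterEquiv_inr (T : ℕ) (u : Unit) : satellitesCenterEquiv T (Sum.inr u) = 0 := by
  simp [satellitesCenterEquiv]

theorem submatrix_scalar_sub_starM (T : ℕ) (wC wS t : ℝ) :
    (scalar _ t - starM T wC wS).submatrix (satellitesCenterEquiv T) (satellitesCenterEquiv T)
      = fromBlocks ((t - 1 / 2) • 1) (of fun _ _ => -(1 / 2)) (of fun _ _ => -(wS / (wC + T * wS)))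
        (of fun _ _ => t - wC / (wC + T * wS)) := by
  ext (i | i) (j | j) <;>
    simp [starM, diagonal_apply, Matrix.one_apply, Fin.succ_ne_zero, (Fin.succ_ne_zero _).symm]
  split_ifs <;> ring

theorem charpoly_starM_eval (T : ℕ) (wC wS t : ℝ) (ht : t ≠ 1 / 2) :
    (starM T wC wS).charpoly.eval t = (t - 1 / 2) ^ T *
      (t - wC / (wC + T * wS) - T * (wS / (wC + T * wS)) / (2 * (t - 1 / 2))) := by
  rw [eval_charpoly, ← det_submatrix_equiv_self (satellitesCenterEquiv T),
    submatrix_scalar_sub_starM, det_fromBlocks_smul_one_const _ _ _ _ (sub_ne_zero.2 ht),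
    Fintype.card_fin]
  field_simp

theorem charpoly_starM (T : ℕ) (hT : 1 ≤ T) (wC wS : ℝ) (hD : wC + T * wS ≠ 0) :
    (starM T wC wS).charpoly = ((1 ::ₘ (Multiset.replicate (T - 1) ((1 : ℝ) / 2)
      + {wC / (wC + T * wS) - 1 / 2})).map fun r => X - C r).prod := by
  refine eq_of_infinite_eval_eq _ _ ((Set.finite_singleton (1 / 2 : ℝ)).infinite_compl.mono ?_)
  intro t ht
  have ht' : t - 1 / 2 ≠ 0 := sub_ne_zero.2 ht
  have hTb : (T : ℝ) * (wS / (wC + T * wS)) = 1 - wC / (wC + T * wS) := by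
    field_simp; ring
  simp only [Set.mem_ofPred_eq, charpoly_starM_eval _ _ _ _ ht, hTb,
    Multiset.map_cons, Multiset.map_add, Multiset.map_replicate, Multiset.map_singleton,
    Multiset.prod_cons, Multiset.prod_add, Multiset.prod_replicate, Multiset.prod_singleton,
    eval_mul, eval_pow, eval_sub, eval_X, eval_C]
  generalize wC / (wC + T * wS) = a
  have key : (t - 1 / 2) * (t - a - (1 - a) / (2 * (t - 1 / 2))) = (t - 1) * (t - (a - 1 / 2)) := by
    rw [mul_sub, mul_div_left_comm, div_mul_cancel_right₀ ht']
    ring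
  obtain ⟨S, rfl⟩ : ∃ S, T = S + 1 := ⟨T - 1, by omega⟩
  rw [Nat.add_sub_cancel, pow_succ, mul_assoc, key]
  ring

theorem eigs_starM (T : ℕ) (hT : 1 ≤ T) (wC wS : ℝ) (hD : wC + T * wS ≠ 0) :
    eigs (starM T wC wS)
      = 1 ::ₘ (Multiset.replicate (T - 1) ((1 : ℝ) / 2) + {wC / (wC + T * wS) - 1 / 2}) := by
  rw [eigs, charpoly_starM T hT wC wS hD, roots_multiset_prod_X_sub_C]

theorem starM_mulVec_eq_half_smul (T : ℕ) (wC wS : ℝ) (v : Fin (T + 1) → ℝ)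
    (h0 : v 0 = 0) (hsum : ∑ j, v j = 0) : starM T wC wS *ᵥ v = (1 / 2 : ℝ) • v := by
  rw [Fin.sum_univ_succ, h0, zero_add] at hsum
  ext i
  cases i using Fin.cases with
  | zero => simp [mulVec, dotProduct, Fin.sum_univ_succ, starM, h0, ← Finset.mul_sum, hsum]
  | succ i => simp [mulVec, dotProduct, Fin.sum_univ_succ, starM, h0, Fin.succ_ne_zero, ite_mul]

/-- spectrum of the star-with-loops transition matrix. -/
theorem stmt_3 (T : ℕ) (hT : 1 ≤ T) (wC wS : ℝ) (hwC : 0 < wC) (hwS : 0 < wS)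
    (D : ℝ) (hD : D = wC + T * wS) :
    eigs (starM T wC wS)
      = 1 ::ₘ (Multiset.replicate (T - 1) ((1 : ℝ) / 2) + {wC / D - 1 / 2}) ∧
    (∀ μ ∈ (eigs (starM T wC wS)).erase 1, |μ| ≤ 1 / 2) ∧
    (∀ v : Fin (T + 1) → ℝ, v 0 = 0 → (∑ j, v j) = 0 →
      starM T wC wS *ᵥ v = ((1 : ℝ) / 2) • v) := by
  subst hD
  have hD : 0 < wC + T * wS := by positivity
  have heigs := eigs_starM T hT wC wS hD.ne'
  refine ⟨heigs, fun μ hμ => ?_, starM_mulVec_eq_half_smul T wC wS⟩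
  rw [heigs, Multiset.erase_cons_head, Multiset.mem_add, Multiset.mem_singleton] at hμ
  rcases hμ with hμ | rfl
  · rw [Multiset.eq_of_mem_replicate hμ]
    norm_num
  · have h0 : 0 ≤ wC / (wC + T * wS) := by positivity
    have h1 : wC / (wC + T * wS) ≤ 1 := (div_le_one hD).2 (le_add_of_nonneg_right (by positivity))
    rw [abs_le]
    constructor <;> linarith
end

section
/- Let G be a finite simple T-regular graph with T ≥ 2 and at least 2 edges, let k ≥ 1 be an integer, and let w_I, w_J > 0 be reals. Set r = (T·w_I + w_J)/((2^k − 1)·T·w_I + w_J). Define the outer projection matrix P_o, indexed by the edges of G, by: P_o[e,f] = r/(2T) for distinct edges e, f sharing an endpoint, P_o[e,e] = 1 − ((T−1)/T)·r, and P_o[e,f] = 0 otherwise. Then P_o is a symmetric row-stochastic matrix and TwoSidedGap(P_o) ≥ (TwoSidedGap(A(G))/2)·(T·w_I + w_J)/((2^k − 1)·T·w_I + w_J) ≥ TwoSidedGap(A(G))/(2·(2^k − 1)). -/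
open Matrix Finset BigOperators Kronecker

open scoped Classical

/-!
Let `N` be the vertex–edge incidence matrix of `G`. Then `N Nᵀ = T (1 + A(G))` and
`Nᵀ N = 2 + A(L(G))` for the line graph `L(G)`, so `P_o = (1 - r) + (r / 2T) Nᵀ N`. As `Nᵀ N` and
`N Nᵀ` have the same nonzero spectrum, the eigenvalues of `P_o` are `f λ = 1 - r + r (1 + λ) / 2`
for the eigenvalues `λ` of `A(G)`, plus `|E| - |V|` copies of `f (-1) = 1 - r`. Since `f` is
monotone, the second and the smallest eigenvalue of `P_o` have absolute value at most `f μ`, where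
`μ = max (|λ₂|, |λₙ|) ≤ 1` for `A(G)`, and `1 - f μ = r (1 - μ) / 2`.
-/

section Spectrum

variable {α β : Type*} [Fintype α] [DecidableEq α] [Fintype β] [DecidableEq β]

theorem card_eigs_of_isHermitian {A : Matrix α α ℝ} (hA : A.IsHermitian) :
    Multiset.card (eigs A) = Fintype.card α := by
  simp [eigs, hA.roots_charpoly_eq_eigenvalues]

theorem eigs_smul_one_add_smul {A : Matrix α α ℝ} (hA : A.IsHermitian) (c d : ℝ) :
    eigs (c • (1 : Matrix α α ℝ) + d • A) = (eigs A).map (fun x => c + d * x) := by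
  have hcfc : cfc (fun x => c + d * x) A = c • (1 : Matrix α α ℝ) + d • A := by
    rw [cfc_add .., cfc_const_mul .., cfc_id' .., cfc_const .., Algebra.algebraMap_eq_smul_one]
  rw [eigs, eigs, ← hcfc, hA.charpoly_cfc_eq, Polynomial.roots_prod _ _
      (prod_ne_zero_iff.mpr fun i _ => Polynomial.X_sub_C_ne_zero _),
    hA.roots_charpoly_eq_eigenvalues, Multiset.map_map]
  simp only [Polynomial.roots_X_sub_C, Multiset.bind_singleton]
  rfl

theorem eigs_mul_comm_of_le (A : Matrix α β ℝ) (B : Matrix β α ℝ)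
    (h : Fintype.card β ≤ Fintype.card α) :
    eigs (A * B) = Multiset.replicate (Fintype.card α - Fintype.card β) 0 + eigs (B * A) := by
  rw [eigs, eigs, charpoly_mul_comm_of_le A B h, Polynomial.roots_mul, Polynomial.roots_X_pow,
    Multiset.nsmul_singleton]
  exact mul_ne_zero (pow_ne_zero _ Polynomial.X_ne_zero) (B * A).charpoly_monic.ne_zero

theorem abs_le_one_of_mem_eigs {M : Matrix α α ℝ} (hM : RowStochastic M) {μ : ℝ}
    (hμ : μ ∈ eigs M) : |μ| ≤ 1 := by
  obtain ⟨hnonneg, hsum⟩ := hM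
  have hev : Module.End.HasEigenvalue (Matrix.toLin' M) μ := by
    rw [Module.End.hasEigenvalue_iff_mem_spectrum, spectrum_toLin',
      mem_spectrum_iff_isRoot_charpoly]
    exact Polynomial.isRoot_of_mem_roots hμ
  obtain ⟨i, hi⟩ := eigenvalue_mem_ball hev
  have hoff : ∑ j ∈ univ.erase i, ‖M i j‖ = 1 - M i i := by
    rw [← hsum i, ← Finset.sum_erase_add _ _ (mem_univ i), add_sub_cancel_right]
    exact Finset.sum_congr rfl fun j _ => Real.norm_of_nonneg (hnonneg i j)
  have hdiag : M i i ≤ 1 := hsum i ▸ single_le_sum (fun j _ => hnonneg i j) (mem_univ i)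
  rw [Metric.mem_closedBall, Real.dist_eq, hoff, abs_le] at hi
  rw [abs_le]
  constructor <;> linarith [hnonneg i i]

end Spectrum

theorem Multiset.sort_replicate_add_map {γ : Type*} [LinearOrder γ] {f : γ → γ} (hf : Monotone f)
    {c : γ} {s : Multiset γ} (hc : ∀ x ∈ s, c ≤ f x) (j : ℕ) :
    (Multiset.replicate j c + s.map f).sort (· ≤ ·)
      = List.replicate j c ++ (s.sort (· ≤ ·)).map f := by
  refine List.Perm.eq_of_pairwise' (Multiset.pairwise_sort _ _) ?_ ?_
  · refine List.pairwise_append.mpr ⟨List.pairwise_replicate.mpr (Or.inr le_rfl),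
      (Multiset.pairwise_sort _ _).map f hf, ?_⟩
    rintro x hx _ hy
    obtain ⟨y, hys, rfl⟩ := List.mem_map.mp hy
    exact List.eq_of_mem_replicate hx ▸ hc y ((Multiset.mem_sort _).mp hys)
  · rw [← Multiset.coe_eq_coe, Multiset.sort_eq, ← Multiset.coe_add, Multiset.coe_replicate,
      ← Multiset.map_coe, Multiset.sort_eq]

theorem List.getD_map_of_lt {γ δ : Type*} (f : γ → δ) {l : List γ} {i : ℕ} (h : i < l.length)
    (d : δ) (d' : γ) : (l.map f).getD i d = f (l.getD i d') := by
  simp [h]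

theorem List.abs_getD_le_one {l : List ℝ} (h : ∀ x ∈ l, |x| ≤ 1) (i : ℕ) : |l.getD i 0| ≤ 1 := by
  rcases lt_or_ge i l.length with hi | hi
  · exact h _ (List.getD_eq_getElem _ _ hi ▸ List.getElem_mem hi)
  · rw [List.getD_eq_default _ _ hi, abs_zero]
    exact zero_le_one

section Gap

variable {α β : Type*} [Fintype α] [DecidableEq α] [Fintype β] [DecidableEq β]
  {A : Matrix α α ℝ} {M : Matrix β β ℝ} {f : ℝ → ℝ} {c : ℝ} {j : ℕ}

theorem length_sortedEigs_of_isHermitian (hA : A.IsHermitian) :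
    (sortedEigs A).length = Fintype.card α := by
  rw [sortedEigs, Multiset.length_sort, card_eigs_of_isHermitian hA]

theorem twoSidedGap_nonneg (hA : ∀ x ∈ eigs A, |x| ≤ 1) : 0 ≤ twoSidedGap A := by
  have h : ∀ x ∈ sortedEigs A, |x| ≤ 1 := fun x hx => hA x ((Multiset.mem_sort _).mp hx)
  rw [twoSidedGap, sub_nonneg]
  exact max_le (List.abs_getD_le_one h _) (List.abs_getD_le_one h _)

theorem secondEig_eq_of_sortedEigs_eq (hα : 2 ≤ Fintype.card α)
    (hlen : (sortedEigs A).length = Fintype.card α) (hcard : Fintype.card β = j + Fintype.card α)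
    (h : sortedEigs M = List.replicate j c ++ (sortedEigs A).map f) :
    secondEig M = f (secondEig A) := by
  rw [secondEig, secondEig, h, hcard, List.getD_append_right _ _ _ _ (by simp; omega),
    List.length_replicate, List.getD_map_of_lt _ (by omega)]
  congr 2
  omega

theorem minEig_eq_of_sortedEigs_eq (hα : 0 < Fintype.card α)
    (hlen : (sortedEigs A).length = Fintype.card α)
    (h : sortedEigs M = List.replicate j c ++ (sortedEigs A).map f) :
    minEig M = c ∨ minEig M = f (minEig A) := by
  rw [minEig, minEig, h]
  rcases j.eq_zero_or_pos with rfl | hj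
  · exact .inr (List.getD_map_of_lt _ (by omega) _ _)
  · exact .inl (by rw [List.getD_append _ _ _ _ (by simpa), List.getD_eq_getElem _ _ (by simpa),
      List.getElem_replicate])

theorem le_twoSidedGap_of_eigs_eq {r : ℝ} (hr0 : 0 ≤ r) (hr1 : r ≤ 1)
    (hA : ∀ x ∈ eigs A, |x| ≤ 1) (hlen : (sortedEigs A).length = Fintype.card α)
    (hα : 2 ≤ Fintype.card α) (hcard : Fintype.card β = j + Fintype.card α)
    (hM : eigs M = Multiset.replicate j (1 - r) + (eigs A).map (fun x => 1 - r + r * (1 + x) / 2)) :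
    twoSidedGap A / 2 * r ≤ twoSidedGap M := by
  set f : ℝ → ℝ := fun x => 1 - r + r * (1 + x) / 2
  have hmono : Monotone f := fun x y hxy => by simp only [f]; gcongr
  have hf1 : f (-1) = 1 - r := by ring
  have hsort : sortedEigs M = List.replicate j (f (-1)) ++ (sortedEigs A).map f := by
    rw [sortedEigs, hM, ← hf1]
    exact Multiset.sort_replicate_add_map hmono
      (fun x hx => hmono (neg_le_of_abs_le (hA x hx))) j
  set μ := max |secondEig A| |minEig A|
  have hμ0 : 0 ≤ μ := (abs_nonneg _).trans (le_max_left _ _)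
  have hμ1 : μ ≤ 1 := by
    have := twoSidedGap_nonneg hA
    rw [twoSidedGap] at this
    linarith
  have hbound : ∀ x, -1 ≤ x → x ≤ μ → |f x| ≤ f μ := fun x hx hxμ =>
    abs_le.mpr ⟨by linarith [hmono hx, hmono (hx.trans hxμ)], hmono hxμ⟩
  have hbound' : ∀ x, |x| ≤ μ → |f x| ≤ f μ := fun x hxμ =>
    hbound x (neg_le_of_abs_le (hxμ.trans hμ1)) ((le_abs_self x).trans hxμ)
  have hmaxM : max |secondEig M| |minEig M| ≤ f μ := by
    refine max_le ?_ ?_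
    · rw [secondEig_eq_of_sortedEigs_eq hα hlen hcard hsort]
      exact hbound' _ (le_max_left _ _)
    · rcases minEig_eq_of_sortedEigs_eq (by omega) hlen hsort with h | h <;> rw [h]
      · exact hbound _ le_rfl (by linarith)
      · exact hbound' _ (le_max_right _ _)
  have hfμ : f μ = 1 - (1 - μ) / 2 * r := by ring
  change (1 - μ) / 2 * r ≤ 1 - max |secondEig M| |minEig M|
  linarith

end Gap

theorem Sym2.card_filter_mem_and_mem {V : Type*} [Fintype V] [DecidableEq V] {e f : Sym2 V}
    (hef : e ≠ f) :
    #{v | v ∈ e ∧ v ∈ f} = if ∃ v, v ∈ e ∧ v ∈ f then 1 else 0 := by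
  split_ifs with h
  · obtain ⟨v, hv⟩ := h
    refine card_eq_one.mpr ⟨v, eq_singleton_iff_unique_mem.mpr ⟨by simpa using hv, fun w hw => ?_⟩⟩
    by_contra hwv
    simp only [mem_filter, mem_univ, true_and] at hw
    exact hef (((Sym2.mem_and_mem_iff hwv).mp ⟨hw.1, hv.1⟩).trans
      ((Sym2.mem_and_mem_iff hwv).mp ⟨hw.2, hv.2⟩).symm)
  · exact card_eq_zero.mpr (filter_eq_empty_iff.mpr fun v _ hv => h ⟨v, hv⟩)

namespace SimpleGraph

section

variable {V : Type*} [Fintype V] (G : SimpleGraph V) [DecidableRel G.Adj]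

theorem normAdj_eq_inv_smul_adjMatrix (T : ℕ) : normAdj G T = (T : ℝ)⁻¹ • G.adjMatrix ℝ := by
  ext u v
  by_cases h : G.Adj u v <;> simp [normAdj, h]

theorem isHermitian_normAdj (T : ℕ) : (normAdj G T).IsHermitian := by
  rw [isHermitian_iff_isSymm, normAdj_eq_inv_smul_adjMatrix]
  exact G.isSymm_adjMatrix.smul _

theorem rowStochastic_normAdj {T : ℕ} (hT : T ≠ 0) (hreg : G.IsRegularOfDegree T) :
    RowStochastic (normAdj G T) := by
  refine ⟨fun u v => by unfold normAdj; positivity, fun u => ?_⟩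
  have hrow : ∑ v, G.adjMatrix ℝ u v = T := by
    have h := G.adjMatrix_mulVec_const_apply_of_regular (a := (1 : ℝ)) hreg (v := u)
    simpa only [Matrix.mulVec, dotProduct, Function.const_apply, mul_one] using h
  simp only [normAdj_eq_inv_smul_adjMatrix, Matrix.smul_apply, smul_eq_mul, ← mul_sum, hrow]
  exact inv_mul_cancel₀ (Nat.cast_ne_zero.mpr hT)

theorem sum_edgeSet_eq_sum_sym2 (g : Sym2 V → ℝ) (hg : ∀ e ∉ G.edgeSet, g e = 0) :
    ∑ e : G.edgeSet, g e = ∑ e, g e := by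
  rw [Finset.sum_set_coe]
  exact sum_subset (subset_univ _) fun e _ he => hg e (by simpa using he)

theorem two_le_card_of_card_edgeSet_pos (h : 0 < Fintype.card G.edgeSet) : 2 ≤ Fintype.card V := by
  obtain ⟨⟨e, he⟩⟩ : Nonempty G.edgeSet := Fintype.card_pos_iff.mp h
  induction e using Sym2.ind with
  | _ a b => exact Fintype.one_lt_card_iff_nontrivial.mpr ⟨a, b, G.ne_of_adj he⟩

variable {G} in
theorem IsRegularOfDegree.card_le_card_edgeSet {d : ℕ} (hreg : G.IsRegularOfDegree d)
    (hd : 2 ≤ d) : Fintype.card V ≤ Fintype.card G.edgeSet := by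
  have h := G.sum_degrees_eq_twice_card_edges
  rw [sum_congr rfl fun v _ => hreg.degree_eq v, sum_const, card_univ, smul_eq_mul,
    edgeFinset, Set.toFinset_card] at h
  nlinarith

end

section

variable {V : Type*} [DecidableEq V] (G : SimpleGraph V) [DecidableRel G.Adj]

def edgeIncMatrix : Matrix V G.edgeSet ℝ := (G.incMatrix ℝ).submatrix id (↑)

theorem edgeIncMatrix_apply (v : V) (e : G.edgeSet) :
    G.edgeIncMatrix v e = if v ∈ (e : Sym2 V) then 1 else 0 := by
  simp [edgeIncMatrix, incMatrix_apply', incidenceSet, e.2]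

theorem edgeIncMatrix_nonneg (v : V) (e : G.edgeSet) : 0 ≤ G.edgeIncMatrix v e := by
  rw [edgeIncMatrix_apply]; positivity

variable [Fintype V]

theorem sum_edgeIncMatrix_apply (v : V) : ∑ e, G.edgeIncMatrix v e = G.degree v := by
  rw [← G.sum_incMatrix_apply]
  exact G.sum_edgeSet_eq_sum_sym2 _ fun e he => G.incMatrix_of_notMem_incidenceSet fun h => he h.1

theorem sum_edgeIncMatrix_apply_left (e : G.edgeSet) : ∑ v, G.edgeIncMatrix v e = 2 :=
  G.sum_incMatrix_apply_of_mem_edgeSet e.2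

theorem edgeIncMatrix_mul_transpose {T : ℕ} (hT : T ≠ 0) (hreg : G.IsRegularOfDegree T) :
    G.edgeIncMatrix * G.edgeIncMatrixᵀ = (T : ℝ) • 1 + (T : ℝ) • normAdj G T := by
  have hinc : G.edgeIncMatrix * G.edgeIncMatrixᵀ = G.incMatrix ℝ * (G.incMatrix ℝ)ᵀ := by
    ext u v
    exact G.sum_edgeSet_eq_sum_sym2 (fun e => G.incMatrix ℝ u e * G.incMatrix ℝ v e) fun e he => by
      simp only [G.incMatrix_of_notMem_incidenceSet fun h => he h.1, zero_mul]
  ext u v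
  rw [hinc, incMatrix_mul_transpose, normAdj_eq_inv_smul_adjMatrix, smul_smul,
    mul_inv_cancel₀ (Nat.cast_ne_zero.mpr hT), one_smul]
  by_cases huv : u = v
  · subst huv; simp [hreg.degree_eq]
  · by_cases hadj : G.Adj u v <;> simp [huv, hadj]

theorem transpose_edgeIncMatrix_mul :
    G.edgeIncMatrixᵀ * G.edgeIncMatrix = (2 : ℝ) • 1 + G.lineGraph.adjMatrix ℝ := by
  ext e f
  have hprod : ∀ v, G.edgeIncMatrix v e * G.edgeIncMatrix v f =
      if v ∈ (e : Sym2 V) ∧ v ∈ (f : Sym2 V) then 1 else 0 := fun v => by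
    rw [edgeIncMatrix_apply, edgeIncMatrix_apply, ite_zero_mul_ite_zero, mul_one]
  simp only [Matrix.mul_apply, Matrix.transpose_apply, hprod, sum_boole, Matrix.add_apply,
    Matrix.smul_apply, Matrix.one_apply, adjMatrix_apply, lineGraph_adj_iff_exists]
  by_cases hef : e = f
  · subst hef
    simpa [edgeIncMatrix_apply] using G.sum_edgeIncMatrix_apply_left e
  · rw [Sym2.card_filter_mem_and_mem (Subtype.coe_ne_coe.mpr hef)]
    simp [hef]

theorem eq_smul_one_add_smul_transpose_edgeIncMatrix_mul {T : ℕ} (hT : T ≠ 0) {r : ℝ}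
    {P : Matrix G.edgeSet G.edgeSet ℝ}
    (hP : ∀ e f : G.edgeSet, P e f =
      if e = f then 1 - (((T : ℝ) - 1) / T) * r
      else if ∃ v : V, v ∈ (e : Sym2 V) ∧ v ∈ (f : Sym2 V) then r / (2 * T) else 0) :
    P = (1 - r) • 1 + (r / (2 * T)) • (G.edgeIncMatrixᵀ * G.edgeIncMatrix) := by
  ext e f
  rw [hP, G.transpose_edgeIncMatrix_mul]
  by_cases hef : e = f
  · subst hef
    simp only [if_pos, Matrix.add_apply, Matrix.smul_apply, one_apply_eq, smul_eq_mul, mul_one,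
      adjMatrix_apply, G.lineGraph.irrefl, if_false, add_zero]
    field_simp
    ring
  · simp [hef, lineGraph_adj_iff_exists]

end

end SimpleGraph

section

variable {V E : Type*} [Fintype V] [DecidableEq E] (N : Matrix V E ℝ)

theorem isSymm_smul_one_add_smul_transpose_mul (c d : ℝ) :
    (c • (1 : Matrix E E ℝ) + d • (Nᵀ * N)).IsSymm :=
  (isSymm_one.smul c).add (IsSymm.smul (by rw [IsSymm, transpose_mul, transpose_transpose]) d)

variable [Fintype E]

theorem rowStochastic_smul_one_add_smul_transpose_mul (hN : ∀ v e, 0 ≤ N v e) {T : ℝ}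
    (hT : 0 < T) (hrow : ∀ v, ∑ e, N v e = T) (hcol : ∀ e, ∑ v, N v e = 2) {r : ℝ}
    (hr0 : 0 ≤ r) (hr1 : r ≤ 1) :
    RowStochastic ((1 - r) • (1 : Matrix E E ℝ) + (r / (2 * T)) • (Nᵀ * N)) := by
  have hsum : ∀ e, ∑ f, (Nᵀ * N) e f = 2 * T := fun e => by
    simp only [Matrix.mul_apply, Matrix.transpose_apply]
    rw [sum_comm]
    simp only [← mul_sum, hrow, ← sum_mul, hcol]
  refine ⟨fun e f => ?_, fun e => ?_⟩
  · have hone : 0 ≤ (1 : Matrix E E ℝ) e f := by rw [Matrix.one_apply]; positivity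
    have hprod : 0 ≤ (Nᵀ * N) e f := sum_nonneg fun v _ => mul_nonneg (hN v e) (hN v f)
    rw [Matrix.add_apply, Matrix.smul_apply, Matrix.smul_apply]
    exact add_nonneg (smul_nonneg (by linarith) hone) (smul_nonneg (by positivity) hprod)
  · simp only [Matrix.add_apply, Matrix.smul_apply, smul_eq_mul, sum_add_distrib, ← mul_sum, hsum,
      Matrix.one_apply, sum_ite_eq, mem_univ, if_true]
    field_simp
    ring

variable [DecidableEq V]

theorem eigs_smul_one_add_smul_transpose_mul {A : Matrix V V ℝ} (hA : A.IsHermitian) {T : ℝ}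
    (hT : T ≠ 0) (hNN : N * Nᵀ = T • (1 : Matrix V V ℝ) + T • A)
    (hcard : Fintype.card V ≤ Fintype.card E) (r : ℝ) :
    eigs ((1 - r) • (1 : Matrix E E ℝ) + (r / (2 * T)) • (Nᵀ * N))
      = Multiset.replicate (Fintype.card E - Fintype.card V) (1 - r)
        + (eigs A).map (fun x => 1 - r + r * (1 + x) / 2) := by
  rw [eigs_smul_one_add_smul (by simpa using isHermitian_conjTranspose_mul_self N),
    eigs_mul_comm_of_le _ _ hcard, hNN, eigs_smul_one_add_smul hA, Multiset.map_add,
    Multiset.map_replicate, Multiset.map_map]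
  congr 1
  · simp
  · refine Multiset.map_congr rfl fun x _ => ?_
    simp only [Function.comp_apply]
    field_simp

end

theorem inv_le_add_div_mul_add {a b q : ℝ} (ha : 0 ≤ a) (hb : 0 < b) (hq : 1 ≤ q) :
    q⁻¹ ≤ (a + b) / (q * a + b) := by
  rw [inv_eq_one_div, div_le_div_iff₀ (by linarith) (by positivity)]
  nlinarith

theorem add_div_mul_add_le_one {a b q : ℝ} (ha : 0 ≤ a) (hb : 0 < b) (hq : 1 ≤ q) :
    (a + b) / (q * a + b) ≤ 1 := by
  rw [div_le_one (by positivity)]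
  nlinarith

/-- the outer projection chain, indexed by the edges of G, is symmetric,
row-stochastic, and has two-sided gap at least
(TwoSidedGap(A(G))/2)·(T·w_I + w_J)/((2^k − 1)·T·w_I + w_J) ≥ TwoSidedGap(A(G))/(2(2^k−1)). -/
theorem stmt_7 {V : Type*} [Fintype V] [DecidableEq V] (T : ℕ) (hT : 2 ≤ T)
    (G : SimpleGraph V) [DecidableRel G.Adj] (hreg : G.IsRegularOfDegree T)
    (hE : 2 ≤ Fintype.card G.edgeSet)
    (k : ℕ) (hk : 1 ≤ k) (wI wJ : ℝ) (hwI : 0 < wI) (hwJ : 0 < wJ)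
    (r : ℝ) (hr : r = ((T : ℝ) * wI + wJ) / (((2 : ℝ) ^ k - 1) * T * wI + wJ))
    (Po : Matrix G.edgeSet G.edgeSet ℝ)
    (hPo : ∀ e f : G.edgeSet, Po e f =
      if e = f then 1 - (((T : ℝ) - 1) / T) * r
      else if ∃ v : V, v ∈ (e : Sym2 V) ∧ v ∈ (f : Sym2 V) then r / (2 * T) else 0) :
    RowStochastic Po ∧ Po.IsSymm ∧
    twoSidedGap Po ≥ (twoSidedGap (normAdj G T) / 2)
        * (((T : ℝ) * wI + wJ) / (((2 : ℝ) ^ k - 1) * T * wI + wJ)) ∧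
    (twoSidedGap (normAdj G T) / 2)
        * (((T : ℝ) * wI + wJ) / (((2 : ℝ) ^ k - 1) * T * wI + wJ))
      ≥ twoSidedGap (normAdj G T) / (2 * ((2 : ℝ) ^ k - 1)) := by
  have hT0 : (0 : ℝ) < T := by positivity
  have hq : (1 : ℝ) ≤ 2 ^ k - 1 := by
    linarith [le_self_pow₀ (one_le_two (α := ℝ)) (by omega : k ≠ 0)]
  have hr_inv : (2 ^ k - 1 : ℝ)⁻¹ ≤ r := by
    rw [hr, mul_assoc]; exact inv_le_add_div_mul_add (by positivity) hwJ hq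
  have hr1 : r ≤ 1 := by rw [hr, mul_assoc]; exact add_div_mul_add_le_one (by positivity) hwJ hq
  have hr0 : 0 ≤ r := (inv_nonneg.mpr (by linarith)).trans hr_inv
  have hA := G.isHermitian_normAdj T
  have hA_eigs : ∀ x ∈ eigs (normAdj G T), |x| ≤ 1 := fun x hx =>
    abs_le_one_of_mem_eigs (G.rowStochastic_normAdj (by omega) hreg) hx
  have hcard := hreg.card_le_card_edgeSet hT
  rw [← hr, G.eq_smul_one_add_smul_transpose_edgeIncMatrix_mul (by omega) hPo]
  refine ⟨rowStochastic_smul_one_add_smul_transpose_mul _ G.edgeIncMatrix_nonneg hT0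
      (fun v => by rw [G.sum_edgeIncMatrix_apply, hreg.degree_eq]) G.sum_edgeIncMatrix_apply_left
      hr0 hr1, isSymm_smul_one_add_smul_transpose_mul _ _ _,
    le_twoSidedGap_of_eigs_eq hr0 hr1 hA_eigs (length_sortedEigs_of_isHermitian hA)
      (G.two_le_card_of_card_edgeSet_pos (by omega)) (Nat.sub_add_cancel hcard).symm
      (eigs_smul_one_add_smul_transpose_mul _ hA hT0.ne'
        (G.edgeIncMatrix_mul_transpose (by omega) hreg) hcard r), ?_⟩
  calc twoSidedGap (normAdj G T) / (2 * (2 ^ k - 1))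
      = twoSidedGap (normAdj G T) / 2 * (2 ^ k - 1)⁻¹ := by
        rw [div_mul_eq_div_div, div_eq_mul_inv]
    _ ≤ twoSidedGap (normAdj G T) / 2 * r :=
      mul_le_mul_of_nonneg_left hr_inv (div_nonneg (twoSidedGap_nonneg hA_eigs) zero_le_two)
end

section
/- For integers k ≥ 0 and s ≥ k+2, the down-up walk P on (k+1)-subsets of an s-element set satisfies OneSidedGap(P) ≥ 1/(k+1). -/
open Matrix Finset BigOperators Kronecker

/-! The walk is `P = (1 / ((k+1)(s-k))) • N Nᵀ`, where `N` is the inclusion matrix of `k`-sets in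
`(k+1)`-sets, so `x ⬝ᵥ P x` is a multiple of `‖x ᵥ* N‖²`. On vectors summing to zero the down
operator `x ↦ x ᵥ* N` satisfies `‖x ᵥ* N‖² ≤ k (s-k-1) ‖x‖²`; this follows by induction on `k` from
the commutation relation `N₊ᵀ N₊ = N Nᵀ + (s - 2(k+1)) • 1` between consecutive inclusion matrices
and Cauchy–Schwarz. Hence the quadratic form of `P` is at most `k/(k+1)` on the hyperplane
`1ᗮ`, and a hyperplane meets the span of the top two eigenvectors, so `λ₂ ≤ k/(k+1)`. -/

theorem exists_mul_add_mul_eq_zero {R : Type*} [CommRing R] [Nontrivial R] (a b : R) :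
    ∃ c d : R, (c ≠ 0 ∨ d ≠ 0) ∧ c * a + d * b = 0 := by
  by_cases ha : a = 0
  · exact ⟨1, 0, Or.inl one_ne_zero, by simp [ha]⟩
  · exact ⟨b, -a, Or.inr (neg_ne_zero.mpr ha), by ring⟩

section DotProduct

variable {n R : Type*} [Fintype n] [CommRing R] [LinearOrder R] [IsStrictOrderedRing R]

theorem Matrix.dotProduct_self_nonneg (v : n → R) : 0 ≤ v ⬝ᵥ v :=
  Fintype.sum_nonneg fun i => mul_self_nonneg (v i)

theorem Matrix.dotProduct_sq_le (v w : n → R) : (v ⬝ᵥ w) ^ 2 ≤ (v ⬝ᵥ v) * (w ⬝ᵥ w) := by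
  simpa only [dotProduct, sq] using sum_mul_sq_le_sq_mul_sq univ v w

end DotProduct

theorem Matrix.dotProduct_mul_transpose_mulVec {m n R : Type*} [Fintype m] [Fintype n]
    [CommSemiring R] (A : Matrix m n R) (x : m → R) :
    x ⬝ᵥ ((A * Aᵀ) *ᵥ x) = (x ᵥ* A) ⬝ᵥ (x ᵥ* A) := by
  rw [← mulVec_mulVec, dotProduct_mulVec, mulVec_transpose]

theorem Finset.card_inter_lt_of_ne_of_card_eq {α : Type*} [DecidableEq α] {s t : Finset α}
    (hst : s ≠ t) (hcard : #s = #t) : #(s ∩ t) < #s := by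
  refine (card_le_card inter_subset_left).lt_of_ne fun h => hst ?_
  have hsub : s ⊆ t := inter_eq_left.mp (eq_of_subset_of_card_le inter_subset_left h.ge)
  exact eq_of_subset_of_card_le hsub hcard.ge

section Spectral

variable {ι : Type*} [Fintype ι] [DecidableEq ι]

theorem sortedEigs_eq_reverse_eigenvalues₀ {A : Matrix ι ι ℝ} (hA : A.IsHermitian) :
    sortedEigs A = (List.ofFn hA.eigenvalues₀).reverse := by
  refine List.Perm.eq_reverse_of_sortedLE_of_sortedGE ?_ (Multiset.pairwise_sort _ _).sortedLE
    hA.eigenvalues₀_antitone.sortedGE_ofFn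
  rw [← Multiset.coe_eq_coe, sortedEigs, Multiset.sort_eq, eigs,
    hA.roots_charpoly_eq_eigenvalues₀, Fin.univ_val_map]
  rfl

theorem secondEig_eq_eigenvalues₀ {A : Matrix ι ι ℝ} (hA : A.IsHermitian)
    (hcard : 2 ≤ Fintype.card ι) : secondEig A = hA.eigenvalues₀ ⟨1, hcard⟩ := by
  rw [secondEig, sortedEigs_eq_reverse_eigenvalues₀ hA, List.getD_eq_getElem _ _ (by simp; omega),
    List.getElem_reverse, List.getElem_ofFn]
  congr 2
  simp only [List.length_ofFn]
  omega

theorem Matrix.IsHermitian.dotProduct_eigenvectorBasis {A : Matrix ι ι ℝ} (hA : A.IsHermitian)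
    (i j : ι) :
    ⇑(hA.eigenvectorBasis i) ⬝ᵥ ⇑(hA.eigenvectorBasis j) = if i = j then 1 else 0 := by
  simpa [PiLp.inner_apply, dotProduct, mul_comm] using
    orthonormal_iff_ite.mp hA.eigenvectorBasis.orthonormal i j

theorem Matrix.IsHermitian.lt_dotProduct_mulVec_of_eigenvalues_gt {A : Matrix ι ι ℝ}
    (hA : A.IsHermitian) {i j : ι} (hij : i ≠ j) {γ : ℝ} (hi : γ < hA.eigenvalues i)
    (hj : γ < hA.eigenvalues j) {c d : ℝ} (hcd : c ≠ 0 ∨ d ≠ 0) :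
    let x := c • ⇑(hA.eigenvectorBasis i) + d • ⇑(hA.eigenvectorBasis j)
    γ * (x ⬝ᵥ x) < x ⬝ᵥ (A *ᵥ x) := by
  intro x
  have hx : x ⬝ᵥ x = c ^ 2 + d ^ 2 := by
    simp only [x, add_dotProduct, dotProduct_add, smul_dotProduct, dotProduct_smul, smul_eq_mul,
      hA.dotProduct_eigenvectorBasis, if_neg hij, if_neg hij.symm, if_true, mul_one, mul_zero,
      add_zero, zero_add]
    ring
  have hAx : x ⬝ᵥ (A *ᵥ x) = c ^ 2 * hA.eigenvalues i + d ^ 2 * hA.eigenvalues j := by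
    simp only [x, mulVec_add, mulVec_smul, hA.mulVec_eigenvectorBasis, add_dotProduct,
      dotProduct_add, smul_dotProduct, dotProduct_smul, smul_eq_mul,
      hA.dotProduct_eigenvectorBasis, if_neg hij, if_neg hij.symm, if_true, mul_one, mul_zero,
      add_zero, zero_add]
    ring
  rw [hx, hAx]
  rcases hcd with hc | hd
  · nlinarith [sq_pos_of_ne_zero hc, sq_nonneg d]
  · nlinarith [sq_pos_of_ne_zero hd, sq_nonneg c]

theorem secondEig_le_of_dotProduct_mulVec_le {A : Matrix ι ι ℝ} (hA : A.IsHermitian)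
    (hcard : 2 ≤ Fintype.card ι) (w : ι → ℝ) {γ : ℝ}
    (h : ∀ x, w ⬝ᵥ x = 0 → x ⬝ᵥ (A *ᵥ x) ≤ γ * (x ⬝ᵥ x)) : secondEig A ≤ γ := by
  rw [secondEig_eq_eigenvalues₀ hA hcard]
  by_contra! hγ
  let e : Fin (Fintype.card ι) ≃ ι := Fintype.equivOfCardEq (Fintype.card_fin _)
  have heig (k : Fin (Fintype.card ι)) : hA.eigenvalues (e k) = hA.eigenvalues₀ k := by
    simp [Matrix.IsHermitian.eigenvalues, e]
  have h₀ : γ < hA.eigenvalues (e ⟨0, by omega⟩) := by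
    rw [heig]; exact hγ.trans_le (hA.eigenvalues₀_antitone (Fin.mk_le_mk.mpr zero_le_one))
  have h₁ : γ < hA.eigenvalues (e ⟨1, hcard⟩) := by rw [heig]; exact hγ
  have hne : e ⟨0, by omega⟩ ≠ e ⟨1, hcard⟩ := by simp [e]
  obtain ⟨c, d, hcd, hw⟩ := exists_mul_add_mul_eq_zero
    (w ⬝ᵥ ⇑(hA.eigenvectorBasis (e ⟨0, by omega⟩))) (w ⬝ᵥ ⇑(hA.eigenvectorBasis (e ⟨1, hcard⟩)))
  refine (hA.lt_dotProduct_mulVec_of_eigenvalues_gt hne h₀ h₁ hcd).not_ge (h _ ?_)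
  simpa [dotProduct_add, dotProduct_smul] using hw

end Spectral

section Slices

abbrev Slice (α : Type*) (m : ℕ) := {S : Finset α // #S = m}

variable {α : Type*} [Fintype α]

theorem sum_slice_ite (m : ℕ) (p : Finset α → Prop) [DecidablePred p] :
    ∑ S : Slice α m, (if p S.1 then 1 else 0 : ℝ) = #{S ∈ powersetCard m univ | p S} := by
  rw [← Finset.sum_subtype _ (fun _ => mem_powersetCard_univ) fun S => if p S then (1 : ℝ) else 0,
    sum_boole]

variable [DecidableEq α]

def inclusionMatrix (α : Type*) [DecidableEq α] (m : ℕ) : Matrix (Slice α (m + 1)) (Slice α m) ℝ :=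
  Matrix.of fun S T => if T.1 ⊆ S.1 then 1 else 0

theorem sum_slice_ite_subset (m : ℕ) (A : Finset α) :
    ∑ T : Slice α m, (if T.1 ⊆ A then 1 else 0 : ℝ) = (#A).choose m := by
  rw [sum_slice_ite m (· ⊆ A), ← card_powersetCard]
  congr 2
  ext T
  simp [mem_powersetCard, and_comm]

theorem inclusionMatrix_mulVec_one (m : ℕ) :
    inclusionMatrix α m *ᵥ 1 = ((m : ℝ) + 1) • (1 : Slice α (m + 1) → ℝ) := by
  ext S
  simp only [mulVec, dotProduct, inclusionMatrix, of_apply, Pi.one_apply, mul_one, Pi.smul_apply,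
    smul_eq_mul, sum_slice_ite_subset, S.2, Nat.choose_succ_self_right]
  push_cast; ring

theorem sum_vecMul_inclusionMatrix (m : ℕ) (x : Slice α (m + 1) → ℝ) :
    ∑ T, (x ᵥ* inclusionMatrix α m) T = ((m : ℝ) + 1) * ∑ S, x S := by
  rw [← dotProduct_one, ← dotProduct_mulVec, inclusionMatrix_mulVec_one, dotProduct_smul,
    dotProduct_one, smul_eq_mul]

theorem inclusionMatrix_mul_transpose_apply (m : ℕ) (S S' : Slice α (m + 1)) :
    (inclusionMatrix α m * (inclusionMatrix α m)ᵀ) S S' =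
      if S = S' then (m : ℝ) + 1 else if #(S.1 ∩ S'.1) = m then 1 else 0 := by
  have hcount : (inclusionMatrix α m * (inclusionMatrix α m)ᵀ) S S' = (#(S.1 ∩ S'.1)).choose m := by
    rw [mul_apply, ← sum_slice_ite_subset]
    refine sum_congr rfl fun T _ => ?_
    simp only [inclusionMatrix, transpose_apply, of_apply, subset_inter_iff, ite_zero_mul_ite_zero,
      mul_one]
  rw [hcount]
  split_ifs with hSS' hm
  · subst hSS'
    rw [inter_self, S.2, Nat.choose_succ_self_right]
    push_cast; ring
  · rw [hm, Nat.choose_self, Nat.cast_one]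
  · have hlt := card_inter_lt_of_ne_of_card_eq (Subtype.coe_injective.ne hSS') (S.2.trans S'.2.symm)
    rw [S.2] at hlt
    rw [Nat.choose_eq_zero_of_lt (by omega), Nat.cast_zero]

theorem transpose_inclusionMatrix_mul_apply (m : ℕ) (T T' : Slice α (m + 1)) :
    ((inclusionMatrix α (m + 1))ᵀ * inclusionMatrix α (m + 1)) T T' =
      #{S ∈ powersetCard (m + 2) univ | T.1 ∪ T'.1 ⊆ S} := by
  rw [mul_apply, ← sum_slice_ite]
  refine sum_congr rfl fun S _ => ?_
  simp only [inclusionMatrix, transpose_apply, of_apply, union_subset_iff, ite_zero_mul_ite_zero,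
    mul_one]

theorem transpose_inclusionMatrix_mul_self (m : ℕ) :
    (inclusionMatrix α (m + 1))ᵀ * inclusionMatrix α (m + 1) =
      inclusionMatrix α m * (inclusionMatrix α m)ᵀ +
        ((Fintype.card α : ℝ) - 2 * (m + 1)) • (1 : Matrix (Slice α (m + 1)) _ ℝ) := by
  ext T T'
  rw [transpose_inclusionMatrix_mul_apply, Matrix.add_apply, inclusionMatrix_mul_transpose_apply,
    Matrix.smul_apply, one_apply, smul_eq_mul]
  by_cases hTT' : T = T'
  · subst hTT'
    have hle : m + 1 ≤ Fintype.card α := T.2 ▸ card_le_univ T.1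
    rw [union_self, card_filter_powersetCard_subset _ _ _ (subset_univ _) (by rw [T.2]; omega),
      card_univ, T.2, show m + 2 - (m + 1) = 1 by omega, Nat.choose_one_right, Nat.cast_sub hle]
    simp only [if_true, mul_one]
    push_cast; ring
  · have hlt := card_inter_lt_of_ne_of_card_eq (Subtype.coe_injective.ne hTT') (T.2.trans T'.2.symm)
    have hunion := card_union_add_card_inter T.1 T'.1
    rw [T.2] at hlt
    rw [T.2, T'.2] at hunion
    simp only [hTT', if_false, mul_zero, add_zero]
    split_ifs with hm
    · rw [card_filter_powersetCard_subset _ _ _ (subset_univ _) (by omega),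
        show m + 2 - #(T.1 ∪ T'.1) = 0 by omega, Nat.choose_zero_right, Nat.cast_one]
    · rw [Nat.cast_eq_zero, card_eq_zero, filter_eq_empty_iff]
      intro S hS hsub
      have := card_le_card hsub
      rw [mem_powersetCard_univ] at hS
      omega

theorem inclusionMatrix_mulVec_dotProduct_self (m : ℕ) (y : Slice α (m + 1) → ℝ) :
    (inclusionMatrix α (m + 1) *ᵥ y) ⬝ᵥ (inclusionMatrix α (m + 1) *ᵥ y) =
      (y ᵥ* inclusionMatrix α m) ⬝ᵥ (y ᵥ* inclusionMatrix α m) +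
        ((Fintype.card α : ℝ) - 2 * (m + 1)) * (y ⬝ᵥ y) := by
  rw [← vecMul_transpose, ← dotProduct_mul_transpose_mulVec, transpose_transpose,
    transpose_inclusionMatrix_mul_self, add_mulVec, dotProduct_add, dotProduct_mul_transpose_mulVec,
    smul_mulVec, one_mulVec, dotProduct_smul, smul_eq_mul]

theorem vecMul_inclusionMatrix_dotProduct_self_le (m : ℕ) (hm : m < Fintype.card α)
    (x : Slice α (m + 1) → ℝ) (hx : ∑ S, x S = 0) :
    (x ᵥ* inclusionMatrix α m) ⬝ᵥ (x ᵥ* inclusionMatrix α m) ≤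
      m * ((Fintype.card α : ℝ) - m - 1) * (x ⬝ᵥ x) := by
  induction m with
  | zero =>
    have hzero : x ᵥ* inclusionMatrix α 0 = 0 := by
      ext T
      simp [vecMul, dotProduct, inclusionMatrix, card_eq_zero.mp T.2, hx]
    simp [hzero]
  | succ m ih =>
    have hmn : (m : ℝ) + 2 ≤ Fintype.card α := by exact_mod_cast hm
    set n : ℝ := (Fintype.card α : ℝ)
    set d := x ᵥ* inclusionMatrix α (m + 1)
    have hd : ∑ T, d T = 0 := by rw [sum_vecMul_inclusionMatrix, hx, mul_zero]
    have hup : (inclusionMatrix α (m + 1) *ᵥ d) ⬝ᵥ (inclusionMatrix α (m + 1) *ᵥ d) ≤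
        (m + 1) * (n - m - 2) * (d ⬝ᵥ d) := by
      rw [inclusionMatrix_mulVec_dotProduct_self]
      nlinarith [ih (by omega) d hd]
    have hcs : (d ⬝ᵥ d) ^ 2 ≤ (x ⬝ᵥ x) * ((m + 1) * (n - m - 2) * (d ⬝ᵥ d)) := by
      calc (d ⬝ᵥ d) ^ 2 = (x ⬝ᵥ (inclusionMatrix α (m + 1) *ᵥ d)) ^ 2 := by
            rw [dotProduct_mulVec]
        _ ≤ (x ⬝ᵥ x) * ((inclusionMatrix α (m + 1) *ᵥ d) ⬝ᵥ (inclusionMatrix α (m + 1) *ᵥ d)) :=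
            dotProduct_sq_le _ _
        _ ≤ _ := mul_le_mul_of_nonneg_left hup (dotProduct_self_nonneg x)
    have hc : 0 ≤ ((m : ℝ) + 1) * (n - m - 2) := by nlinarith
    push_cast
    nlinarith [mul_nonneg hc (dotProduct_self_nonneg x), dotProduct_self_nonneg d]

noncomputable def downUpWalk (α : Type*) [Fintype α] [DecidableEq α] (m : ℕ) :
    Matrix (Slice α (m + 1)) (Slice α (m + 1)) ℝ :=
  (1 / ((m + 1) * (Fintype.card α - m)) : ℝ) • (inclusionMatrix α m * (inclusionMatrix α m)ᵀ)

theorem downUpWalk_apply {m : ℕ} (hm : m < Fintype.card α) (S S' : Slice α (m + 1)) :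
    downUpWalk α m S S' =
      if S = S' then 1 / ((Fintype.card α : ℝ) - m)
      else if #(S.1 ∩ S'.1) = m then 1 / (((m : ℝ) + 1) * ((Fintype.card α : ℝ) - m)) else 0 := by
  have hnm : (0 : ℝ) < Fintype.card α - m := by
    have : (m : ℝ) < Fintype.card α := by exact_mod_cast hm
    linarith
  rw [downUpWalk, Matrix.smul_apply, inclusionMatrix_mul_transpose_apply, smul_eq_mul]
  split_ifs
  · field_simp
  · rw [mul_one]
  · rw [mul_zero]

theorem isHermitian_downUpWalk (m : ℕ) : (downUpWalk α m).IsHermitian := by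
  rw [downUpWalk, ← conjTranspose_eq_transpose_of_trivial]
  exact (isHermitian_mul_conjTranspose_self _).smul (IsSelfAdjoint.all _)

theorem dotProduct_downUpWalk_mulVec_le {m : ℕ} (hm : m < Fintype.card α)
    (x : Slice α (m + 1) → ℝ) (hx : ∑ S, x S = 0) :
    x ⬝ᵥ (downUpWalk α m *ᵥ x) ≤ m / (m + 1) * (x ⬝ᵥ x) := by
  have hnm : (m : ℝ) + 1 ≤ Fintype.card α := by exact_mod_cast hm
  set n : ℝ := (Fintype.card α : ℝ)
  calc x ⬝ᵥ (downUpWalk α m *ᵥ x) =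
        1 / ((m + 1) * (n - m)) * ((x ᵥ* inclusionMatrix α m) ⬝ᵥ (x ᵥ* inclusionMatrix α m)) := by
        rw [downUpWalk, smul_mulVec, dotProduct_smul, dotProduct_mul_transpose_mulVec, smul_eq_mul]
    _ ≤ 1 / ((m + 1) * (n - m)) * (m * (n - m - 1) * (x ⬝ᵥ x)) := by
        have : (0 : ℝ) < n - m := by linarith
        gcongr
        exact vecMul_inclusionMatrix_dotProduct_self_le m hm x hx
    _ = m * (n - m - 1) / ((m + 1) * (n - m)) * (x ⬝ᵥ x) := by ring
    _ ≤ m / (m + 1) * (x ⬝ᵥ x) := by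
        refine mul_le_mul_of_nonneg_right ?_ (dotProduct_self_nonneg x)
        rw [div_le_div_iff₀ (by nlinarith) (by positivity)]
        nlinarith

theorem secondEig_downUpWalk_le {m : ℕ} (hm : m + 2 ≤ Fintype.card α) :
    secondEig (downUpWalk α m) ≤ m / (m + 1) := by
  have hcard : 2 ≤ Fintype.card (Slice α (m + 1)) := by
    rw [Fintype.card_finset_len]
    calc 2 ≤ (m + 2).choose (m + 1) := by rw [Nat.choose_succ_self_right]; omega
      _ ≤ (Fintype.card α).choose (m + 1) := Nat.choose_le_choose _ hm
  refine secondEig_le_of_dotProduct_mulVec_le (isHermitian_downUpWalk m) hcard 1 fun x hx => ?_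
  rw [one_dotProduct] at hx
  exact dotProduct_downUpWalk_mulVec_le (by omega) x hx

end Slices

/-- the down-up walk on (k+1)-subsets of an s-element set has
OneSidedGap at least 1/(k+1). -/
theorem stmt_10 (k s : ℕ) (hs : k + 2 ≤ s)
    (P : Matrix {S : Finset (Fin s) // S.card = k + 1} {S : Finset (Fin s) // S.card = k + 1} ℝ)
    (hP : ∀ S S', P S S' =
      if S = S' then 1 / ((s : ℝ) - k)
      else if (S.1 ∩ S'.1).card = k then 1 / (((k : ℝ) + 1) * ((s : ℝ) - k)) else 0) :
    oneSidedGap P ≥ 1 / ((k : ℝ) + 1) := by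
  have hwalk : P = downUpWalk (Fin s) k := by
    ext S S'
    rw [hP, downUpWalk_apply (by rw [Fintype.card_fin]; omega), Fintype.card_fin]
  have hsecond : secondEig P ≤ k / (k + 1) := hwalk ▸ secondEig_downUpWalk_le (by simpa using hs)
  rw [oneSidedGap, ge_iff_le, show 1 / ((k : ℝ) + 1) = 1 - k / (k + 1) by field_simp; ring]
  linarith
end
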